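/- The induced metric of g(x,y) = (2cos x cos y − 1, −√2 sin x cos y, −√2 cos x sin y, √2 sin x sin y, −√2 cos x cos y + √2) with respect to the Lorentzian inner product ⟨u,v⟩ = u₁v₁+u₂v₂+u₃v₃+u₄v₄−u₅v₅ is twice the Euclidean metric on ℝ²: ⟨∂ₓg, ∂ₓg⟩ = ⟨∂ᵧg, ∂ᵧg⟩ = 2 and ⟨∂ₓg, ∂ᵧg⟩ = 0 at every point. -/
import Mathlib

open Real

def lorentz (u v : Fin 5 → ℝ) : ℝ :=
  u 0 * v 0 + u 1 * v 1 + u 2 * v 2 + u 3 * v 3 - u 4 * v 4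

noncomputable def gTorus (x y : ℝ) : Fin 5 → ℝ :=
  ![2 * cos x * cos y - 1,
    -(Real.sqrt 2 * sin x * cos y),
    -(Real.sqrt 2 * cos x * sin y),
    Real.sqrt 2 * sin x * sin y,
    -(Real.sqrt 2 * cos x * cos y) + Real.sqrt 2]

/-- The partial derivative of `gTorus` in the first variable. -/
noncomputable def gx (x y : ℝ) : Fin 5 → ℝ := fun i => deriv (fun x' => gTorus x' y i) x

/-- The partial derivative of `gTorus` in the second variable. -/
noncomputable def gy (x y : ℝ) : Fin 5 → ℝ := fun i => deriv (fun y' => gTorus x y' i) y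

lemma gx_eq (x y : ℝ) : gx x y = ![-(2 * sin x * cos y),
    -(Real.sqrt 2 * cos x * cos y),
    Real.sqrt 2 * sin x * sin y,
    Real.sqrt 2 * cos x * sin y,
    Real.sqrt 2 * sin x * cos y] := by
  funext i
  fin_cases i <;>
  · show deriv _ x = _
    simp only [gTorus, Matrix.cons_val_zero, Matrix.cons_val_one, Matrix.head_cons,
      Matrix.cons_val_two, Matrix.tail_cons, Matrix.cons_val_three, Matrix.cons_val_four]
    norm_num [mul_comm, mul_assoc, mul_left_comm]

lemma gy_eq (x y : ℝ) : gy x y = ![-(2 * cos x * sin y),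
    Real.sqrt 2 * sin x * sin y,
    -(Real.sqrt 2 * cos x * cos y),
    Real.sqrt 2 * sin x * cos y,
    Real.sqrt 2 * cos x * sin y] := by
  funext i
  fin_cases i <;>
  · show deriv _ y = _
    simp only [gTorus, Matrix.cons_val_zero, Matrix.cons_val_one, Matrix.head_cons,
      Matrix.cons_val_two, Matrix.tail_cons, Matrix.cons_val_three, Matrix.cons_val_four]
    norm_num [mul_comm, mul_assoc, mul_left_comm]

theorem stmt_13 (x y : ℝ) :
    lorentz (gx x y) (gx x y) = 2 ∧ lorentz (gy x y) (gy x y) = 2 ∧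
      lorentz (gx x y) (gy x y) = 0 := by
  have h2 : Real.sqrt 2 * Real.sqrt 2 = 2 := Real.mul_self_sqrt (by norm_num)
  have hx := sin_sq_add_cos_sq x
  have hy := sin_sq_add_cos_sq y
  rw [gx_eq, gy_eq]
  simp only [lorentz, Matrix.cons_val_zero, Matrix.cons_val_one, Matrix.head_cons,
    Matrix.cons_val_two, Matrix.tail_cons, Matrix.cons_val_three, Matrix.cons_val_four]
  refine ⟨?_, ?_, ?_⟩
  · linear_combination (cos x^2*cos y^2 + sin x^2*sin y^2 + cos x^2*sin y^2 - sin x^2*cos y^2) * h2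
      + 2*(sin y^2 + cos y^2)*hx + 2*hy
  · linear_combination (sin x^2*sin y^2 + cos x^2*cos y^2 + sin x^2*cos y^2 - cos x^2*sin y^2) * h2
      + 2*(sin y^2 + cos y^2)*hx + 2*hy
  · linear_combination (-2*sin x*cos x*sin y*cos y)*h2
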